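/- arXiv:2411.06043 — 2 statements merged into one kernel-verified Lean document; each statement's English description precedes it below -/
import Mathlib

section
/- Every nonzero subTuring degree bounds a quasiminimal subTuring degree: for every partial function f with no partial computable extension, there exists a set A ⊆ ℕ such that f↾A ≤subT f, f↾A has no partial computable extension, and every total function g with g ≤subT f↾A is computable. -/
open Classical

noncomputable section

/-- `as` is a valid answer history for the sequential oracle computation of `Φ`
with oracle `g` on input `n`: at each round `k`, the machine outputs a query
`(false, q)` with `q` in the domain of `g`, answered by `g q = as[k]`. -/
def ValidHist (Φ : List ℕ →. Bool × ℕ) (g : ℕ →. ℕ) (n : ℕ) (as : List ℕ) : Prop :=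
  ∀ (k : ℕ) (hk : k < as.length), ∃ q : ℕ,
    (false, q) ∈ Φ (n :: as.take k) ∧ (as[k]'hk) ∈ g q

/-- The sequential oracle computation `Φ[g](n)` halts with output `m`. -/
def HaltsTo (Φ : List ℕ →. Bool × ℕ) (g : ℕ →. ℕ) (n m : ℕ) : Prop :=
  ∃ as : List ℕ, ValidHist Φ g n as ∧ (true, m) ∈ Φ (n :: as)

/-- subTuring reducibility: `f ⊆ Φ[g]` for some partial computable `Φ`. -/
def SubTuringLE (f g : ℕ →. ℕ) : Prop :=
  ∃ Φ : List ℕ →. Bool × ℕ, Partrec Φ ∧ ∀ n m, m ∈ f n → HaltsTo Φ g n m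

/-- subTuring equivalence. -/
def SubTuringEquiv (f g : ℕ →. ℕ) : Prop := SubTuringLE f g ∧ SubTuringLE g f

/-- Restriction of a partial function to a set: `f↾A`. -/
def restrictTo (f : ℕ →. ℕ) (A : Set ℕ) : ℕ →. ℕ := fun n =>
  if n ∈ A then f n else Part.none

/-!
Build `A` by finite extension, through conditions: pairs of finite sets forced into and out of
`A`. At stage `c`, first put into `A` a point where `f` disagrees with `eval c`; there are
infinitely many, since otherwise patching `eval c` at finitely many inputs would extend `f`.
Then let `D` be the finite part of `A` built so far. If some halting computation of the `c`-th
functional `Φ` relative to `f` queries a point outside `D`, keep that point out of `A`: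
computations relative to `f↾A` are computations relative to `f`, and these are deterministic,
so `Φ` reduces no total function to `f↾A`. Otherwise the halting computations only query `D`,
so `Φ` reduces `g` to the finite function `f↾D`, and running `Φ` on a partial computable
extension of `f↾D` computes `g`.
-/

theorem mem_restrictTo {f : ℕ →. ℕ} {A : Set ℕ} {n m : ℕ} :
    m ∈ restrictTo f A n ↔ n ∈ A ∧ m ∈ f n := by
  unfold restrictTo
  split_ifs with hn <;> simp [hn]

theorem restrictTo_le (f : ℕ →. ℕ) (A : Set ℕ) : ∀ n, restrictTo f A n ≤ f n :=
  fun _ _ hm => (mem_restrictTo.1 hm).2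

section OracleComputation

variable {Φ : List ℕ →. Bool × ℕ} {h h' : ℕ →. ℕ} {n m : ℕ}

theorem ValidHist.mono {as : List ℕ} (hv : ValidHist Φ h n as) (hle : ∀ n, h n ≤ h' n) :
    ValidHist Φ h' n as :=
  fun k hk => (hv k hk).imp fun q hq => ⟨hq.1, hle q _ hq.2⟩

theorem HaltsTo.mono (hh : HaltsTo Φ h n m) (hle : ∀ n, h n ≤ h' n) : HaltsTo Φ h' n m :=
  hh.imp fun _ hv => ⟨ValidHist.mono hv.1 hle, hv.2⟩

theorem ValidHist.take_eq_take {as₁ as₂ : List ℕ} (h₁ : ValidHist Φ h n as₁)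
    (h₂ : ValidHist Φ h n as₂) {k : ℕ} (hk₁ : k ≤ as₁.length) (hk₂ : k ≤ as₂.length) :
    as₁.take k = as₂.take k := by
  induction k with
  | zero => simp
  | succ k ih =>
    have htake := ih (by omega) (by omega)
    obtain ⟨q₁, hq₁, ha₁⟩ := h₁ k (by omega)
    obtain ⟨q₂, hq₂, ha₂⟩ := h₂ k (by omega)
    rw [htake] at hq₁
    obtain rfl : q₁ = q₂ := (Prod.mk.inj (Part.mem_unique hq₁ hq₂)).2
    rw [List.take_add_one, List.take_add_one, htake, List.getElem?_eq_getElem (by omega),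
      List.getElem?_eq_getElem (by omega), Part.mem_unique ha₁ ha₂]

theorem ValidHist.eq_of_halts {as₁ as₂ : List ℕ} {m₁ m₂ : ℕ}
    (h₁ : ValidHist Φ h n as₁) (e₁ : (true, m₁) ∈ Φ (n :: as₁))
    (h₂ : ValidHist Φ h n as₂) (e₂ : (true, m₂) ∈ Φ (n :: as₂)) : as₁ = as₂ := by
  wlog hle : as₁.length ≤ as₂.length generalizing as₁ as₂ m₁ m₂
  · exact (this h₂ e₂ h₁ e₁ (by omega)).symm
  have hprefix : as₂.take as₁.length = as₁ := by
    rw [← ValidHist.take_eq_take h₁ h₂ le_rfl hle, List.take_length]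
  rcases hle.eq_or_lt with heq | hlt
  · rwa [heq, List.take_length, eq_comm] at hprefix
  · -- round `as₁.length` of `as₂` would be a query where `as₁` already halted
    obtain ⟨q, hq, -⟩ := h₂ as₁.length hlt
    rw [hprefix] at hq
    simpa using Part.mem_unique e₁ hq

theorem SubTuringLE.mono_left {g g' : ℕ →. ℕ} (hg : SubTuringLE g h) (hle : ∀ n, g' n ≤ g n) :
    SubTuringLE g' h :=
  hg.imp fun _ hΦ => ⟨hΦ.1, fun n m hm => hΦ.2 n m (hle n m hm)⟩

theorem SubTuringLE.mono_right {g : ℕ →. ℕ} (hg : SubTuringLE g h) (hle : ∀ n, h n ≤ h' n) :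
    SubTuringLE g h' :=
  hg.imp fun _ hΦ => ⟨hΦ.1, fun n m hm => HaltsTo.mono (hΦ.2 n m hm) hle⟩

theorem SubTuringLE.refl (h : ℕ →. ℕ) : SubTuringLE h h := by
  -- ask the input, then output the last answer
  refine ⟨fun l => Part.some (decide (2 ≤ l.length), l.reverse.headI), ?_, ?_⟩
  · exact (((Primrec.nat_le.comp (Primrec.const 2) Primrec.list_length).decide.pair
      (Primrec.list_headI.comp Primrec.list_reverse)).to_comp).partrec
  · intro n m hm
    refine ⟨[m], fun k hk => ?_, by simp⟩
    obtain rfl : k = 0 := by simpa using hk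
    exact ⟨n, by simp, by simpa using hm⟩

theorem SubTuringLE.of_le {g : ℕ →. ℕ} (hle : ∀ n, g n ≤ h n) : SubTuringLE g h :=
  SubTuringLE.mono_left (SubTuringLE.refl h) hle

end OracleComputation

def HasPartrecExtension (f : ℕ →. ℕ) : Prop :=
  ∃ p : ℕ →. ℕ, Partrec p ∧ ∀ n, f n ≤ p n

theorem HasPartrecExtension.computable {g : ℕ → ℕ} (hg : HasPartrecExtension g) :
    Computable g :=
  let ⟨_, hp, hle⟩ := hg
  hp.of_eq_tot fun n => hle n _ (Part.mem_some _)

section Simulation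

variable {Φ : List ℕ →. Bool × ℕ} {p : ℕ →. ℕ}

/-- A state is the input together with the answers received so far. -/
def runStep (Φ : List ℕ →. Bool × ℕ) (p : ℕ →. ℕ) : ℕ × List ℕ →. ℕ ⊕ (ℕ × List ℕ) :=
  fun s => (Φ (s.1 :: s.2)).bind fun r =>
    cond r.1 (Part.some (Sum.inl r.2)) ((p r.2).map fun a => Sum.inr (s.1, s.2 ++ [a]))

theorem partrec_runStep (hΦ : Partrec Φ) (hp : Partrec p) : Partrec (runStep Φ p) := by
  have hquery : Partrec fun x : (ℕ × List ℕ) × Bool × ℕ => p x.2.2 :=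
    hp.comp (Computable.snd.comp Computable.snd)
  have hextend : Computable₂ fun (x : (ℕ × List ℕ) × Bool × ℕ) (a : ℕ) =>
      (Sum.inr (x.1.1, x.1.2 ++ [a]) : ℕ ⊕ (ℕ × List ℕ)) := by
    have hstate : Computable fun y : ((ℕ × List ℕ) × Bool × ℕ) × ℕ => y.1.1 :=
      Computable.fst.comp Computable.fst
    exact Computable.sumInr.comp ((Computable.fst.comp hstate).pair
      (Computable.list_concat.comp (Computable.snd.comp hstate) Computable.snd))
  refine (hΦ.comp (Computable.list_cons.comp Computable.fst Computable.snd)).bind ?_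
  exact Partrec.cond (Computable.fst.comp Computable.snd)
    (Computable.sumInl.comp (Computable.snd.comp Computable.snd)).partrec (hquery.map hextend)

theorem HaltsTo.mem_fix_runStep {n m : ℕ} (hh : HaltsTo Φ p n m) :
    m ∈ (runStep Φ p).fix (n, []) := by
  obtain ⟨as, hv, hhalt⟩ := hh
  suffices ∀ cs bs, bs ++ cs = as → m ∈ (runStep Φ p).fix (n, bs) from this as [] rfl
  intro cs
  induction cs with
  | nil =>
    rintro bs rfl
    refine PFun.mem_fix_iff.2 (Or.inl (Part.mem_bind_iff.2 ⟨_, by simpa using hhalt, ?_⟩))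
    simp
  | cons a cs ih =>
    rintro bs rfl
    obtain ⟨q, hq, ha⟩ := hv bs.length (by simp)
    refine PFun.mem_fix_iff.2 (Or.inr ⟨(n, bs ++ [a]), ?_, ih _ (by simp)⟩)
    simp only [List.take_left', le_refl, List.getElem_append_right, Nat.sub_self,
      List.getElem_cons_zero] at hq ha
    exact Part.mem_bind_iff.2 ⟨_, hq, by simpa using ha⟩

theorem SubTuringLE.hasPartrecExtension {g h : ℕ →. ℕ} (hg : SubTuringLE g h)
    (hh : HasPartrecExtension h) : HasPartrecExtension g := by
  obtain ⟨p, hp, hle⟩ := hh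
  obtain ⟨Φ, hΦ, hred⟩ := SubTuringLE.mono_right hg hle
  exact ⟨fun n => (runStep Φ p).fix (n, []),
    (partrec_runStep hΦ hp).fix.comp (Computable.id.pair (Computable.const [])),
    fun n m hm => HaltsTo.mem_fix_runStep (hred n m hm)⟩

end Simulation

theorem exists_computable_eq_of_finite_dom {g : ℕ →. ℕ} (hg : {n | (g n).Dom}.Finite) :
    ∃ t : ℕ → Option ℕ, Computable t ∧ ∀ n, (t n : Part ℕ) = g n := by
  obtain ⟨N, hN⟩ := hg.bddAbove
  let table := (List.range (N + 1)).map fun n => (g n).toOption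
  refine ⟨fun n => table.getD n none,
    ((Primrec.list_getD none).comp (Primrec.const table) Primrec.id).to_comp, fun n => ?_⟩
  by_cases hn : n ≤ N
  · simp [table, Nat.lt_succ_of_le hn, Part.of_toOption]
  · have hdom : ¬ (g n).Dom := fun h => hn (hN h)
    simp [table, Part.eq_none_iff'.2 hdom, hn]

theorem hasPartrecExtension_of_finite {f p : ℕ →. ℕ} (hp : Partrec p)
    (hfin : {n | ¬ f n ≤ p n}.Finite) : HasPartrecExtension f := by
  set W := {n | ¬ f n ≤ p n}
  obtain ⟨t, ht, hteq⟩ := exists_computable_eq_of_finite_dom (g := restrictTo f W)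
    (hfin.subset fun n hn => by
      by_contra hnW
      simp [restrictTo, hnW] at hn)
  refine ⟨fun n => cond (t n).isSome (t n) (p n),
    Partrec.cond (Primrec.option_isSome.to_comp.comp ht) ht.ofOption hp, fun n m hm => ?_⟩
  dsimp only
  rcases htn : t n with _ | v
  · have hnW : n ∉ W := fun hnW => by
      simpa [← hteq, htn] using mem_restrictTo.2 ⟨hnW, hm⟩
    simpa using (not_not.1 hnW) m hm
  · have hv : v ∈ f n := (mem_restrictTo (A := W).1 (by simp [← hteq, htn])).2
    simp [Part.mem_unique hm hv]

open Nat.Partrec (Code)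
open Nat.Partrec.Code Encodable Denumerable

def functional (c : Code) : List ℕ →. Bool × ℕ := fun l =>
  (eval c (encode l)).bind fun x => decode (α := Bool × ℕ) x

theorem exists_functional_eq {Φ : List ℕ →. Bool × ℕ} (hΦ : Partrec Φ) :
    ∃ c, functional c = Φ := by
  obtain ⟨c, hc⟩ := exists_code.1 hΦ
  refine ⟨c, funext fun l => ?_⟩
  simp only [functional, hc, encodek, Part.coe_some, Part.bind_some, Part.bind_map,
    Part.bind_some_right]

section Forcing

variable {Φ : List ℕ →. Bool × ℕ} {f : ℕ →. ℕ} {A D : Set ℕ} {n m q : ℕ}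

def IsEscapingQuery (Φ : List ℕ →. Bool × ℕ) (f : ℕ →. ℕ) (D : Set ℕ) (q : ℕ) : Prop :=
  q ∉ D ∧ ∃ n as m, ValidHist Φ f n as ∧ (true, m) ∈ Φ (n :: as) ∧
    ∃ k < as.length, (false, q) ∈ Φ (n :: as.take k)

theorem IsEscapingQuery.mem_of_total (hq : IsEscapingQuery Φ f D q)
    (htot : ∀ n, ∃ m, HaltsTo Φ (restrictTo f A) n m) : q ∈ A := by
  obtain ⟨-, n, as, m, hv, hhalt, k, hk, hqk⟩ := hq
  obtain ⟨m', as', hv', hhalt'⟩ := htot n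
  obtain rfl := ValidHist.eq_of_halts hv hhalt (ValidHist.mono hv' (restrictTo_le f A)) hhalt'
  obtain ⟨q', hq', hanswer⟩ := hv' k hk
  obtain rfl : q' = q := (Prod.mk.inj (Part.mem_unique hq' hqk)).2
  exact (mem_restrictTo.1 hanswer).1

theorem HaltsTo.restrictTo_of_forall_not_isEscapingQuery {h : ℕ →. ℕ}
    (hno : ∀ q, ¬ IsEscapingQuery Φ f D q) (hle : ∀ n, h n ≤ f n) (hh : HaltsTo Φ h n m) :
    HaltsTo Φ (restrictTo f D) n m := by
  obtain ⟨as, hv, hhalt⟩ := hh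
  refine ⟨as, fun k hk => ?_, hhalt⟩
  obtain ⟨q, hq, hanswer⟩ := hv k hk
  refine ⟨q, hq, mem_restrictTo.2 ⟨?_, hle q _ hanswer⟩⟩
  by_contra hqD
  exact hno q ⟨hqD, n, as, m, ValidHist.mono hv hle, hhalt, k, hk, hq⟩

def ForcesQueries (f : ℕ →. ℕ) (A : Set ℕ) : Prop :=
  ∀ Φ, Partrec Φ → ∃ D : Set ℕ, D.Finite ∧
    ((∃ q ∉ A, IsEscapingQuery Φ f D q) ∨ ∀ q, ¬ IsEscapingQuery Φ f D q)

theorem ForcesQueries.computable (hA : ForcesQueries f A) {g : ℕ → ℕ}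
    (hg : SubTuringLE g (restrictTo f A)) : Computable g := by
  obtain ⟨Φ, hΦ, hred⟩ := hg
  obtain ⟨D, hD, ⟨q, hqA, hq⟩ | hno⟩ := hA Φ hΦ
  · exact absurd (hq.mem_of_total fun n => ⟨g n, hred n _ (Part.mem_some _)⟩) hqA
  · have hgD : SubTuringLE g (restrictTo f D) := ⟨Φ, hΦ, fun n m hm =>
      (hred n m hm).restrictTo_of_forall_not_isEscapingQuery hno (restrictTo_le f A)⟩
    refine (hgD.hasPartrecExtension (hasPartrecExtension_of_finite Partrec.none ?_)).computable
    refine hD.subset fun n hn => ?_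
    by_contra hnD
    simp [restrictTo, hnD] at hn

end Forcing

namespace Quasiminimal

variable {Φ : List ℕ →. Bool × ℕ} {f : ℕ →. ℕ} {c : Code} {P : Finset ℕ × Finset ℕ}

def diagonalSet (f : ℕ →. ℕ) (c : Code) : Set ℕ := {n | ¬ f n ≤ eval c n}

theorem infinite_diagonalSet (hf : ¬ HasPartrecExtension f) (c : Code) :
    (diagonalSet f c).Infinite :=
  fun hfin =>
    hf (hasPartrecExtension_of_finite (Partrec.nat_iff.2 (exists_code.2 ⟨c, rfl⟩)) hfin)

def diagonalize (f : ℕ →. ℕ) (c : Code) (P : Finset ℕ × Finset ℕ) : Finset ℕ × Finset ℕ :=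
  if h : (diagonalSet f c \ P.2).Nonempty then (insert h.choose P.1, P.2) else P

def forceQueries (Φ : List ℕ →. Bool × ℕ) (f : ℕ →. ℕ) (P : Finset ℕ × Finset ℕ) :
    Finset ℕ × Finset ℕ :=
  if h : ∃ q, IsEscapingQuery Φ f P.1 q then (P.1, insert h.choose P.2) else P

theorem le_diagonalize : P ≤ diagonalize f c P := by
  unfold diagonalize
  split_ifs
  exacts [⟨Finset.subset_insert _ _, le_rfl⟩, le_rfl]

theorem disjoint_diagonalize (hP : Disjoint P.1 P.2) :
    Disjoint (diagonalize f c P).1 (diagonalize f c P).2 := by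
  unfold diagonalize
  split_ifs with h
  exacts [Finset.disjoint_insert_left.2 ⟨h.choose_spec.2, hP⟩, hP]

theorem exists_mem_diagonalize (h : (diagonalSet f c \ P.2).Nonempty) :
    ∃ n ∈ diagonalSet f c, n ∈ (diagonalize f c P).1 := by
  refine ⟨h.choose, h.choose_spec.1, ?_⟩
  rw [diagonalize, dif_pos h]
  exact Finset.mem_insert_self _ _

theorem le_forceQueries : P ≤ forceQueries Φ f P := by
  unfold forceQueries
  split_ifs
  exacts [⟨le_rfl, Finset.subset_insert _ _⟩, le_rfl]

theorem forceQueries_fst : (forceQueries Φ f P).1 = P.1 := by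
  unfold forceQueries
  split_ifs <;> rfl

theorem disjoint_forceQueries (hP : Disjoint P.1 P.2) :
    Disjoint (forceQueries Φ f P).1 (forceQueries Φ f P).2 := by
  unfold forceQueries
  split_ifs with h
  exacts [Finset.disjoint_insert_right.2 ⟨h.choose_spec.1, hP⟩, hP]

theorem forceQueries_spec :
    (∃ q ∈ (forceQueries Φ f P).2, IsEscapingQuery Φ f P.1 q) ∨
      ∀ q, ¬ IsEscapingQuery Φ f P.1 q := by
  by_cases h : ∃ q, IsEscapingQuery Φ f P.1 q
  · refine Or.inl ⟨h.choose, ?_, h.choose_spec⟩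
    rw [forceQueries, dif_pos h]
    exact Finset.mem_insert_self _ _
  · exact Or.inr (not_exists.1 h)

def stage (f : ℕ →. ℕ) : ℕ → Finset ℕ × Finset ℕ
  | 0 => (∅, ∅)
  | s + 1 => forceQueries (functional (ofNat Code s)) f (diagonalize f (ofNat Code s) (stage f s))

theorem stage_succ_encode (f : ℕ →. ℕ) (c : Code) :
    stage f (encode c + 1) =
      forceQueries (functional c) f (diagonalize f c (stage f (encode c))) := by
  rw [stage, ofNat_encode]

theorem monotone_stage (f : ℕ →. ℕ) : Monotone (stage f) :=
  monotone_nat_of_le_succ fun _ => le_diagonalize.trans le_forceQueries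

theorem disjoint_stage (f : ℕ →. ℕ) (s : ℕ) : Disjoint (stage f s).1 (stage f s).2 := by
  induction s with
  | zero => simp [stage]
  | succ s ih => exact disjoint_forceQueries (disjoint_diagonalize ih)

def genericSet (f : ℕ →. ℕ) : Set ℕ := ⋃ s, ↑(stage f s).1

theorem not_mem_genericSet {q s : ℕ} (hq : q ∈ (stage f s).2) : q ∉ genericSet f := by
  simp only [genericSet, Set.mem_iUnion, Finset.mem_coe, not_exists]
  intro t hqt
  have hmono := monotone_stage f (le_max_left s t)
  have hmono' := monotone_stage f (le_max_right s t)
  exact Finset.disjoint_left.1 (disjoint_stage f (max s t)) (hmono'.1 hqt) (hmono.2 hq)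

theorem exists_mem_diagonalSet_genericSet (hf : ¬ HasPartrecExtension f) (c : Code) :
    ∃ n ∈ diagonalSet f c, n ∈ genericSet f := by
  have hne : (diagonalSet f c \ (stage f (encode c)).2).Nonempty :=
    ((infinite_diagonalSet hf c).sdiff (Finset.finite_toSet _)).nonempty
  obtain ⟨n, hn, hnD⟩ := exists_mem_diagonalize hne
  refine ⟨n, hn, Set.mem_iUnion.2 ⟨encode c + 1, ?_⟩⟩
  rwa [stage_succ_encode, forceQueries_fst]

theorem forcesQueries_genericSet (f : ℕ →. ℕ) : ForcesQueries f (genericSet f) := by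
  intro Φ hΦ
  obtain ⟨c, rfl⟩ := exists_functional_eq hΦ
  set P := diagonalize f c (stage f (encode c))
  refine ⟨P.1, P.1.finite_toSet, ?_⟩
  refine forceQueries_spec.imp_left fun ⟨q, hq, hesc⟩ =>
    ⟨q, not_mem_genericSet (s := encode c + 1) ?_, hesc⟩
  rwa [stage_succ_encode]

end Quasiminimal

theorem bounds_quasiminimal (f : ℕ →. ℕ)
    (hf : ¬ ∃ p : ℕ →. ℕ, Partrec p ∧ ∀ n m, m ∈ f n → m ∈ p n) :
    ∃ A : Set ℕ,
      SubTuringLE (restrictTo f A) f ∧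
      (¬ ∃ p : ℕ →. ℕ, Partrec p ∧ ∀ n m, m ∈ restrictTo f A n → m ∈ p n) ∧
      ∀ g : ℕ → ℕ, SubTuringLE (g : ℕ →. ℕ) (restrictTo f A) → Computable g := by
  refine ⟨Quasiminimal.genericSet f, SubTuringLE.of_le (restrictTo_le f _), ?_,
    fun g hg => (Quasiminimal.forcesQueries_genericSet f).computable hg⟩
  rintro ⟨p, hp, hext⟩
  obtain ⟨c, rfl⟩ := exists_code.1 (Partrec.nat_iff.1 hp)
  obtain ⟨n, hn, hnA⟩ := Quasiminimal.exists_mem_diagonalSet_genericSet hf c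
  exact hn fun m hm => hext n m (mem_restrictTo.2 ⟨hnA, hm⟩)
end
end

section
/- Meet-irreducibility of total degrees within total degrees: for any total functions f, g, h : ℕ → ℕ, if f ∩ g ≤subT h then f ≤subT h or g ≤subT h, where f ∩ g is the subTuring meet. Consequently there is no minimal pair of total subTuring degrees: there are no noncomputable total f, g such that every partial function below both has a partial computable extension. -/
open Classical

noncomputable section

/-- The `e`-th partial computable function `List ℕ →. Bool × ℕ`,
obtained from the `e`-th partial recursive code. -/
def phi (e : ℕ) : List ℕ →. Bool × ℕ := fun l =>
  ((Denumerable.ofNat Nat.Partrec.Code e).eval (Encodable.encode l)).bind fun k =>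
    Part.ofOption (Encodable.decode (α := Bool × ℕ) k)

/-- The meet `f ∩ g`: on input `⟨d, e, n⟩` it takes the common value of
`Φ_d[f](n)` and `Φ_e[g](n)` when both converge and agree; undefined otherwise. -/
def PMeet (f g : ℕ →. ℕ) : ℕ →. ℕ := fun p =>
  ⟨∃ m, HaltsTo (phi p.unpair.1) f p.unpair.2.unpair.2 m ∧
        HaltsTo (phi p.unpair.2.unpair.1) g p.unpair.2.unpair.2 m,
   fun h => Classical.choose h⟩


/-!
Suppose `Ψ[h]` computes `f ∩ g`. For a finite string `σ` let `d σ` be an index of the machine that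
queries the first `|σ|` values of its oracle and outputs `0` if they spell `σ` and `1` otherwise,
and let `P σ τ` say that `Ψ[h]` outputs `0` on the meet-input `⟨d σ, d τ, 0⟩`. Then `P` holds on
all pairs of initial segments of `f` and `g`, fails whenever neither `σ` is an initial segment of
`f` nor `τ` one of `g`, and is c.e. in `h`.

If for arbitrarily long `σ` there are distinct `τ, τ'` of equal length with `P σ τ` and `P σ τ'`,
then every such `σ` is an initial segment of `f`, so `h` computes `f` by searching for one.
Otherwise, beyond some length `n₀`, `P σ τ` with `|σ| = |τ|` forces `τ` to be an initial segment of
`g`, and `h` computes `g` the same way.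

For the second claim, the meet of a minimal pair has a partial computable extension, hence lies
below the constant oracle `0`, and the first claim makes `f` or `g` computable.
-/

open Nat.Partrec Encodable Filter

section Determinism

variable {Φ : List ℕ →. Bool × ℕ} {g : ℕ →. ℕ} {n : ℕ}

theorem ValidHist.take_eq {as bs : List ℕ} (ha : ValidHist Φ g n as) (hb : ValidHist Φ g n bs)
    (hle : as.length ≤ bs.length) : bs.take as.length = as := by
  suffices ∀ k ≤ as.length, bs.take k = as.take k by simpa using this _ le_rfl
  intro k
  induction k with
  | zero => simp
  | succ k ih =>
    intro hk
    have hka : k < as.length := hk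
    have hkb : k < bs.length := by omega
    obtain ⟨q, hq, hqa⟩ := ha k hka
    obtain ⟨q', hq', hqb⟩ := hb k hkb
    rw [ih hka.le] at hq'
    obtain rfl : q' = q := by simpa using Part.mem_unique hq' hq
    rw [List.take_succ_eq_append_getElem hka, List.take_succ_eq_append_getElem hkb, ih hka.le,
      Part.mem_unique hqb hqa]

theorem ValidHist.length_le_of_halts {as bs : List ℕ} {m : ℕ} (ha : ValidHist Φ g n as)
    (hm : (true, m) ∈ Φ (n :: as)) (hb : ValidHist Φ g n bs) : bs.length ≤ as.length := by
  by_contra! hlt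
  obtain ⟨q, hq, -⟩ := hb as.length hlt
  rw [ha.take_eq hb hlt.le] at hq
  simpa using Part.mem_unique hq hm

theorem HaltsTo.unique {m₁ m₂ : ℕ} (h₁ : HaltsTo Φ g n m₁) (h₂ : HaltsTo Φ g n m₂) :
    m₁ = m₂ := by
  obtain ⟨as, ha, hm₁⟩ := h₁
  obtain ⟨bs, hb, hm₂⟩ := h₂
  have hlen := le_antisymm (hb.length_le_of_halts hm₂ ha) (ha.length_le_of_halts hm₁ hb)
  obtain rfl : as = bs := by rw [← ha.take_eq hb hlen.le, hlen, List.take_length]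
  simpa using Part.mem_unique hm₁ hm₂

end Determinism

section Transcripts

variable {Φ : List ℕ →. Bool × ℕ} {g : ℕ →. ℕ} {n m : ℕ}

def Transcript (Φ : List ℕ →. Bool × ℕ) (n : ℕ) (qas : List (ℕ × ℕ)) (m : ℕ) : Prop :=
  (∀ k (hk : k < qas.length), (false, qas[k].1) ∈ Φ (n :: (qas.take k).map Prod.snd)) ∧
    (true, m) ∈ Φ (n :: qas.map Prod.snd)

theorem haltsTo_iff_exists_transcript :
    HaltsTo Φ g n m ↔ ∃ qas : List (ℕ × ℕ), (∀ p ∈ qas, p.2 ∈ g p.1) ∧ Transcript Φ n qas m := by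
  constructor
  · rintro ⟨as, hv, hm⟩
    choose q hq using fun k : Fin as.length => hv k k.2
    have hsnd : (List.ofFn fun k => (q k, as[k])).map Prod.snd = as :=
      List.ext_getElem (by simp) (by simp)
    refine ⟨List.ofFn fun k => (q k, as[k]), ?_, fun k hk => ?_, by rwa [hsnd]⟩
    · simp only [List.mem_ofFn, forall_exists_index]
      rintro _ k rfl
      exact (hq k).2
    · rw [List.map_take, hsnd]
      simpa using (hq ⟨k, by simpa using hk⟩).1
  · rintro ⟨qas, hg, hsteps, hm⟩
    refine ⟨qas.map Prod.snd, fun k hk => ⟨(qas[k]'(by simpa using hk)).1, ?_, ?_⟩, hm⟩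
    · simpa [List.map_take] using hsteps k (by simpa using hk)
    · simpa using hg _ (List.getElem_mem _)

end Transcripts

section Stages

def phiStage (e s : ℕ) (l : List ℕ) : Option (Bool × ℕ) :=
  (Code.evaln s (Denumerable.ofNat Code e) (encode l)).bind decode

variable {e : ℕ} {l : List ℕ} {x : Bool × ℕ}

theorem mem_phi_of_phiStage {s : ℕ} (h : phiStage e s l = some x) : x ∈ phi e l := by
  obtain ⟨k, hk, hx⟩ := Option.bind_eq_some_iff.1 h
  exact Part.mem_bind_iff.2 ⟨k, Code.evaln_sound hk, by simpa using hx⟩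

theorem eventually_phiStage_of_mem (h : x ∈ phi e l) : ∀ᶠ s in atTop, phiStage e s l = some x := by
  obtain ⟨k, hk, hx⟩ := Part.mem_bind_iff.1 h
  obtain ⟨s, hs⟩ := Code.evaln_complete.1 hk
  filter_upwards [eventually_ge_atTop s] with t ht
  simp only [phiStage, Option.bind_eq_some_iff]
  exact ⟨k, Code.evaln_mono ht hs, by simpa using hx⟩

theorem primrec_phiStage (e : ℕ) : Primrec₂ (phiStage e) :=
  Primrec.option_bind
    (Code.primrec_evaln.comp
      ((Primrec.fst.pair (Primrec.const _)).pair (Primrec.encode.comp Primrec.snd)))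
    (Primrec.decode.comp Primrec.snd)

def StageTrace (e s n : ℕ) (qas : List (ℕ × ℕ)) (m : ℕ) : Prop :=
  (∀ k < qas.length,
    phiStage e s (n :: (qas.take k).map Prod.snd) = qas[k]?.map fun p => (false, p.1)) ∧
  phiStage e s (n :: qas.map Prod.snd) = some (true, m)

theorem transcript_phi_iff {n m : ℕ} {qas : List (ℕ × ℕ)} :
    Transcript (phi e) n qas m ↔ ∃ s, StageTrace e s n qas m := by
  constructor
  · rintro ⟨hsteps, hm⟩
    have hall : ∀ᶠ s in atTop, ∀ k ∈ Set.Iio qas.length,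
        phiStage e s (n :: (qas.take k).map Prod.snd) = qas[k]?.map fun p => (false, p.1) := by
      refine (Set.finite_Iio _).eventually_all.2 fun k hk => ?_
      rw [List.getElem?_eq_getElem hk]
      exact eventually_phiStage_of_mem (hsteps k hk)
    exact (hall.and (eventually_phiStage_of_mem hm)).exists
  · rintro ⟨s, hsteps, hm⟩
    refine ⟨fun k hk => mem_phi_of_phiStage (s := s) ?_, mem_phi_of_phiStage hm⟩
    rw [hsteps k hk, List.getElem?_eq_getElem hk, Option.map_some]

theorem primrecRel_stageTrace (e : ℕ) :
    PrimrecRel fun (x : ℕ × ℕ) (c : ℕ × List (ℕ × ℕ)) => StageTrace e c.1 x.1 c.2 x.2 := by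
  open Primrec in
  have hstep : PrimrecRel fun (k : ℕ) (y : (ℕ × ℕ) × ℕ × List (ℕ × ℕ)) =>
      phiStage e y.2.1 (y.1.1 :: (y.2.2.take k).map Prod.snd) =
        y.2.2[k]?.map fun p => (false, p.1) :=
    Primrec.eq.comp
      ((primrec_phiStage e).comp (fst.comp (snd.comp snd))
        (list_cons.comp (fst.comp (fst.comp snd))
          (list_map (list_take.comp fst (snd.comp (snd.comp snd))) (snd.comp snd).to₂)))
      (option_map (list_getElem?.comp (snd.comp (snd.comp snd)) fst)
        ((const false).pair (fst.comp snd)).to₂)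
  have hhalt : PrimrecPred fun y : (ℕ × ℕ) × ℕ × List (ℕ × ℕ) =>
      phiStage e y.2.1 (y.1.1 :: y.2.2.map Prod.snd) = some (true, y.1.2) :=
    Primrec.eq.comp
      ((primrec_phiStage e).comp (fst.comp snd)
        (list_cons.comp (fst.comp fst) (list_map (snd.comp snd) (snd.comp snd).to₂)))
      (option_some.comp ((const true).pair (snd.comp fst)))
  refine ((hstep.forall_mem_list.comp (list_range.comp (list_length.comp (snd.comp snd)))
    Primrec.id).and hhalt).of_eq fun y => ?_
  simp only [List.mem_range, StageTrace, id]

end Stages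

section RePredIn

/-- `P` is c.e. relative to the total oracle `h`, in the form a search machine can use: a
certificate `b` touches `h` only through the finite list `log b` of query–answer pairs. -/
def RePredIn (h : ℕ → ℕ) {α : Type} [Primcodable α] (P : α → Prop) : Prop :=
  ∃ (β : Type) (_ : Primcodable β) (R : α → β → Prop) (log : β → List (ℕ × ℕ)),
    PrimrecRel R ∧ Primrec log ∧ ∀ a, P a ↔ ∃ b, R a b ∧ ∀ p ∈ log b, h p.1 = p.2

variable {h : ℕ → ℕ} {α γ : Type} [Primcodable α] [Primcodable γ]

theorem RePredIn.of_iff {P Q : α → Prop} (hP : RePredIn h P) (H : ∀ a, P a ↔ Q a) :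
    RePredIn h Q := by
  obtain ⟨β, _, R, log, hR, hlog, hPR⟩ := hP
  exact ⟨β, _, R, log, hR, hlog, fun a => (H a).symm.trans (hPR a)⟩

theorem PrimrecPred.rePredIn {P : α → Prop} (hP : PrimrecPred P) : RePredIn h P :=
  ⟨Unit, inferInstance, fun a _ => P a, fun _ => [], hP.comp Primrec.fst, Primrec.const _,
    fun a => by simp⟩

theorem RePredIn.comp {P : γ → Prop} (hP : RePredIn h P) {f : α → γ} (hf : Primrec f) :
    RePredIn h fun a => P (f a) := by
  obtain ⟨β, _, R, log, hR, hlog, hPR⟩ := hP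
  exact ⟨β, _, fun a b => R (f a) b, log, hR.comp (hf.comp Primrec.fst) Primrec.snd, hlog,
    fun a => hPR (f a)⟩

theorem RePredIn.and {P Q : α → Prop} (hP : RePredIn h P) (hQ : RePredIn h Q) :
    RePredIn h fun a => P a ∧ Q a := by
  obtain ⟨β, _, R, log, hR, hlog, hPR⟩ := hP
  obtain ⟨β', _, R', log', hR', hlog', hQR⟩ := hQ
  refine ⟨β × β', inferInstance, fun a b => R a b.1 ∧ R' a b.2, fun b => log b.1 ++ log' b.2,
    (hR.comp Primrec.fst (Primrec.fst.comp Primrec.snd)).and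
      (hR'.comp Primrec.fst (Primrec.snd.comp Primrec.snd)),
    Primrec.list_append.comp (hlog.comp Primrec.fst) (hlog'.comp Primrec.snd), fun a => ?_⟩
  simp only [hPR, hQR, List.mem_append, or_imp, forall_and, Prod.exists]
  aesop

theorem RePredIn.exists {P : α × γ → Prop} (hP : RePredIn h P) :
    RePredIn h fun a => ∃ c, P (a, c) := by
  obtain ⟨β, _, R, log, hR, hlog, hPR⟩ := hP
  refine ⟨γ × β, inferInstance, fun a b => R (a, b.1) b.2, fun b => log b.2,
    hR.comp (Primrec.fst.pair (Primrec.fst.comp Primrec.snd)) (Primrec.snd.comp Primrec.snd),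
    hlog.comp Primrec.snd, fun a => ?_⟩
  simp only [hPR, Prod.exists]

theorem rePredIn_haltsTo_phi (e : ℕ) :
    RePredIn h fun x : ℕ × ℕ => HaltsTo (phi e) (h : ℕ →. ℕ) x.1 x.2 := by
  refine ⟨ℕ × List (ℕ × ℕ), inferInstance, _, Prod.snd, primrecRel_stageTrace e, Primrec.snd,
    fun x => ?_⟩
  simp only [haltsTo_iff_exists_transcript, transcript_phi_iff, PFun.coe_val, Part.mem_some_iff]
  constructor
  · rintro ⟨qas, hqas, s, hs⟩
    exact ⟨(s, qas), hs, fun p hp => (hqas p hp).symm⟩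
  · rintro ⟨⟨s, qas⟩, hs, hqas⟩
    exact ⟨qas, fun p hp => (hqas p hp).symm, s, hs⟩

end RePredIn

section InitSeg

def initSeg (f : ℕ → ℕ) (n : ℕ) : List ℕ := (List.range n).map f

variable {f : ℕ → ℕ}

@[simp]
theorem length_initSeg (f : ℕ → ℕ) (n : ℕ) : (initSeg f n).length = n := by
  simp [initSeg]

theorem getElem?_initSeg_eq_some {k i m : ℕ} : (initSeg f k)[i]? = some m ↔ i < k ∧ f i = m := by
  rw [initSeg, List.getElem?_map]
  by_cases hi : i < k <;> simp [hi]

theorem getD_initSeg {k n : ℕ} (hn : n < k) : (initSeg f k).getD n 0 = f n := by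
  simp [initSeg, hn]

theorem take_initSeg {k K : ℕ} (hk : k ≤ K) : (initSeg f K).take k = initSeg f k := by
  simp [initSeg, ← List.map_take, List.take_range, hk]

end InitSeg

section Search

/-- On input `n` with answers `as = [h 0, …, h (k-1)]` so far, halt with the first output of
`test n as t` for `t < k`, and otherwise ask for `h k`. -/
def searchMachine (test : ℕ → List ℕ → ℕ → Option ℕ) (l : List ℕ) : Bool × ℕ :=
  (((List.range l.tail.length).filterMap (test l.headI l.tail)).head?.map (true, ·)).getD
    (false, l.tail.length)

theorem computable_searchMachine {test : ℕ → List ℕ → ℕ → Option ℕ}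
    (htest : Primrec fun y : (ℕ × List ℕ) × ℕ => test y.1.1 y.1.2 y.2) :
    Computable (searchMachine test) := by
  open Primrec in
  exact (option_getD.comp
    (option_map
      (list_head?.comp (listFilterMap (list_range.comp (list_length.comp list_tail))
        (htest.comp ((list_headI.pair list_tail).comp fst |>.pair snd)).to₂))
      ((const true).pair snd).to₂)
    ((const false).pair (list_length.comp list_tail))).to_comp

theorem subTuringLE_of_rePredIn_graph {F h : ℕ → ℕ}
    (hF : RePredIn h fun x : ℕ × ℕ => F x.1 = x.2) : SubTuringLE (F : ℕ →. ℕ) (h : ℕ →. ℕ) := by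
  obtain ⟨β, _, R, log, hR, hlog, hFR⟩ := hF
  let test (n : ℕ) (as : List ℕ) (t : ℕ) : Option ℕ :=
    (decode (α := ℕ × β) t).bind fun c =>
      if R (n, c.1) c.2 ∧ ∀ p ∈ log c.2, as[p.1]? = some p.2 then some c.1 else none
  have htest : Primrec fun y : (ℕ × List ℕ) × ℕ => test y.1.1 y.1.2 y.2 := by
    open Primrec in
    have hknown : PrimrecRel fun (p : ℕ × ℕ) (as : List ℕ) => as[p.1]? = some p.2 :=
      Primrec.eq.comp (list_getElem?.comp snd (fst.comp fst)) (option_some.comp (snd.comp fst))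
    exact option_bind (Primrec.decode.comp snd) (Primrec.ite
      ((hR.comp ((fst.comp (fst.comp fst)).pair (fst.comp snd)) (snd.comp snd)).and
        (hknown.forall_mem_list.comp (hlog.comp (snd.comp snd)) (snd.comp (fst.comp fst))))
      (option_some.comp (fst.comp snd)) (const none))
  have sound : ∀ {n k t m}, test n (initSeg h k) t = some m → F n = m := by
    intro n k t m ht
    obtain ⟨c, -, hc⟩ := Option.bind_eq_some_iff.1 ht
    split_ifs at hc with hcert
    cases hc
    exact (hFR _).2 ⟨c.2, hcert.1, fun p hp => (getElem?_initSeg_eq_some.1 (hcert.2 p hp)).2⟩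
  have found : ∀ n, ∃ k, (List.range k).filterMap (test n (initSeg h k)) ≠ [] := by
    intro n
    obtain ⟨b, hb, hlog⟩ := (hFR (n, F n)).1 rfl
    have hbig : ∀ᶠ k in atTop, encode (F n, b) < k ∧ ∀ p ∈ log b, p.1 < k :=
      (eventually_gt_atTop _).and
        ((log b).finite_toSet.eventually_all.2 fun p _ => eventually_gt_atTop _)
    obtain ⟨k, hkt, hkp⟩ := hbig.exists
    refine ⟨k, List.ne_nil_of_mem (a := F n) (List.mem_filterMap.2 ⟨_, List.mem_range.2 hkt, ?_⟩)⟩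
    simp only [test, encodek, Option.bind_some]
    rw [if_pos ⟨hb, fun p hp => getElem?_initSeg_eq_some.2 ⟨hkp p hp, hlog p hp⟩⟩]
  refine ⟨fun l => Part.some (searchMachine test l),
    (computable_searchMachine htest).partrec, fun n m hm => ?_⟩
  obtain rfl : m = F n := by simpa [PFun.coe_val, eq_comm] using hm
  refine ⟨initSeg h (Nat.find (found n)), fun k hk => ⟨k, ?_, by simp [initSeg]⟩, ?_⟩
  · have hkK : k < Nat.find (found n) := by simpa using hk
    have hnone := not_not.1 (Nat.find_min (found n) hkK)
    simp only [Part.mem_some_iff, searchMachine, List.tail_cons, List.headI_cons,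
      take_initSeg hkK.le, length_initSeg, hnone, List.head?_nil, Option.map_none, Option.getD_none]
  · obtain ⟨m, ms, hms⟩ := List.ne_nil_iff_exists_cons.1 (Nat.find_spec (found n))
    obtain ⟨t, -, ht⟩ := List.mem_filterMap.1 (hms ▸ List.mem_cons_self :
      m ∈ (List.range _).filterMap (test n (initSeg h (Nat.find (found n)))))
    simp only [Part.mem_some_iff, searchMachine, List.tail_cons, List.headI_cons,
      length_initSeg, hms, List.head?_cons, Option.map_some, Option.getD_some,
      sound ht]

end Search

section Indices

theorem partrec_phi : Partrec₂ phi :=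
  (Code.eval_part.comp ((Computable.ofNat Code).comp Computable.fst)
    (Computable.encode.comp Computable.snd)).bind
    (Computable.ofOption (Computable.decode.comp Computable.snd))

theorem exists_primrec_phi_eq {α : Type} [Primcodable α] {Φ : α → List ℕ →. Bool × ℕ}
    (hΦ : Partrec₂ Φ) : ∃ d : α → ℕ, Primrec d ∧ ∀ a, phi (d a) = Φ a := by
  obtain ⟨c, hc⟩ := Code.exists_code.1 hΦ
  refine ⟨fun a => encode (c.curry (encode a)),
    Primrec.encode.comp (Code.primrec₂_curry.comp (Primrec.const c) Primrec.encode),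
    fun a => funext fun l => ?_⟩
  simp only [phi, Denumerable.ofNat_encode, Code.eval_curry, hc, ← encode_prod_val, encodek,
    Part.coe_some, Part.bind_some, Part.bind_map]
  simp

theorem subTuringLE_of_haltsTo_phi {f g : ℕ →. ℕ} {i j : ℕ → ℕ} (hi : Computable i)
    (hj : Computable j) (H : ∀ n m, m ∈ f n → HaltsTo (phi (i n)) g (j n) m) :
    SubTuringLE f g :=
  ⟨fun l => phi (i l.headI) (j l.headI :: l.tail),
    partrec_phi.comp (hi.comp (Primrec.list_headI.to_comp))
      (Computable.list_cons.comp (hj.comp Primrec.list_headI.to_comp) Primrec.list_tail.to_comp),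
    H⟩

theorem subTuringLE_of_partrec_extension {p q : ℕ →. ℕ} (hq : Partrec q)
    (hpq : ∀ n m, m ∈ p n → m ∈ q n) (g : ℕ →. ℕ) : SubTuringLE p g :=
  ⟨fun l => (q l.headI).map (true, ·),
    (hq.comp Primrec.list_headI.to_comp).map ((Computable.const true).pair Computable.snd).to₂,
    fun n m hm => ⟨[], by simp [ValidHist], Part.mem_map _ (hpq n m hm)⟩⟩

end Indices

theorem computable_of_subTuringLE {F h : ℕ → ℕ} (hF : SubTuringLE (F : ℕ →. ℕ) (h : ℕ →. ℕ))
    (hh : Computable h) : Computable F := by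
  obtain ⟨Φ, hΦ, hred⟩ := hF
  let step : ℕ × List ℕ →. ℕ ⊕ (ℕ × List ℕ) := fun x =>
    (Φ (x.1 :: x.2)).map fun r => bif r.1 then .inl r.2 else .inr (x.1, x.2 ++ [h r.2])
  have hstep : Partrec step := by
    open Computable in
    exact (hΦ.comp (list_cons.comp fst snd)).map (cond (fst.comp snd) (sumInl.comp (snd.comp snd))
      (sumInr.comp ((fst.comp fst).pair
        (list_concat.comp (snd.comp fst) (hh.comp (snd.comp snd))))))
  refine ((Partrec.fix hstep).comp (Computable.id.pair (Computable.const []))).of_eq_tot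
    fun n => ?_
  obtain ⟨as, hv, hm⟩ := hred n (F n) (by simp [PFun.coe_val])
  suffices ∀ k ≤ as.length, F n ∈ PFun.fix step (n, as.take k) from this 0 (Nat.zero_le _)
  intro k hk
  induction hk using Nat.decreasingInduction with
  | self =>
    rw [List.take_length]
    exact PFun.fix_stop ((Part.mem_map_iff _).2 ⟨_, hm, rfl⟩)
  | of_succ k hk ih =>
    obtain ⟨q, hq, hqa⟩ := hv k hk
    have hnext : .inr (n, as.take (k + 1)) ∈ step (n, as.take k) :=
      (Part.mem_map_iff _).2 ⟨_, hq, by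
        rw [PFun.coe_val, Part.mem_some_iff] at hqa
        simp [List.take_succ_eq_append_getElem hk, hqa]⟩
    rwa [PFun.fix_fwd_eq hnext]

section Meet

theorem mem_pMeet_iff {f g : ℕ →. ℕ} {p m : ℕ} :
    m ∈ PMeet f g p ↔ HaltsTo (phi p.unpair.1) f p.unpair.2.unpair.2 m ∧
      HaltsTo (phi p.unpair.2.unpair.1) g p.unpair.2.unpair.2 m := by
  constructor
  · rintro ⟨hd, rfl⟩
    exact Classical.choose_spec hd
  · rintro ⟨hf, hg⟩
    have hd : (PMeet f g p).Dom := ⟨m, hf, hg⟩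
    exact ⟨hd, (Classical.choose_spec hd).1.unique hf⟩

theorem pMeet_le_left (f g : ℕ →. ℕ) : SubTuringLE (PMeet f g) f :=
  subTuringLE_of_haltsTo_phi (Computable.fst.comp Computable.unpair)
    (Computable.snd.comp (Computable.unpair.comp (Computable.snd.comp Computable.unpair)))
    fun _ _ hm => (mem_pMeet_iff.1 hm).1

theorem pMeet_le_right (f g : ℕ →. ℕ) : SubTuringLE (PMeet f g) g :=
  subTuringLE_of_haltsTo_phi
    (Computable.fst.comp (Computable.unpair.comp (Computable.snd.comp Computable.unpair)))
    (Computable.snd.comp (Computable.unpair.comp (Computable.snd.comp Computable.unpair)))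
    fun _ _ hm => (mem_pMeet_iff.1 hm).2

end Meet

section Testers

def prefixTester (σ : List ℕ) (l : List ℕ) : Bool × ℕ :=
  if l.tail.length < σ.length then (false, l.tail.length) else (true, if l.tail = σ then 0 else 1)

theorem haltsTo_prefixTester (f : ℕ → ℕ) (σ : List ℕ) (n : ℕ) :
    HaltsTo (fun l => Part.some (prefixTester σ l)) (f : ℕ →. ℕ) n
      (if initSeg f σ.length = σ then 0 else 1) := by
  refine ⟨initSeg f σ.length, fun k hk => ⟨k, ?_, by simp [initSeg]⟩, ?_⟩
  · have hkσ : k < σ.length := by simpa using hk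
    simp [prefixTester, hkσ, hkσ.le]
  · simp [prefixTester]
    rfl

theorem exists_prefixTester_index : ∃ d : List ℕ → ℕ, Primrec d ∧
    ∀ (f : ℕ → ℕ) σ n, HaltsTo (phi (d σ)) (f : ℕ →. ℕ) n
      (if initSeg f σ.length = σ then 0 else 1) := by
  have htester : Primrec₂ prefixTester := by
    open Primrec in
    exact Primrec.ite (nat_lt.comp (list_length.comp (list_tail.comp snd)) (list_length.comp fst))
      ((const false).pair (list_length.comp (list_tail.comp snd)))
      ((const true).pair
        (Primrec.ite (Primrec.eq.comp (list_tail.comp snd) fst) (const 0) (const 1)))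
  obtain ⟨d, hd, hdσ⟩ := exists_primrec_phi_eq
    (Φ := fun σ l => Part.some (prefixTester σ l)) htester.to_comp.partrec₂
  exact ⟨d, hd, fun f σ n => (hdσ σ).symm ▸ haltsTo_prefixTester f σ n⟩

end Testers

section Splitting

variable {f g : ℕ → ℕ} {P : List ℕ → List ℕ → Prop}

theorem initSeg_eq_of_two_partners
    (hP' : ∀ σ τ, P σ τ → initSeg f σ.length = σ ∨ initSeg g τ.length = τ)
    {σ τ τ' : List ℕ} (hlen : τ.length = τ'.length) (hne : τ ≠ τ') (hτ : P σ τ)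
    (hτ' : P σ τ') : initSeg f σ.length = σ := by
  by_contra hσ
  have e := (hP' σ τ hτ).resolve_left hσ
  have e' := (hP' σ τ' hτ').resolve_left hσ
  exact hne (by rw [← e, ← e', hlen])

theorem graph_iff_of_forall_two_partners
    (hP' : ∀ σ τ, P σ τ → initSeg f σ.length = σ ∨ initSeg g τ.length = τ)
    (hA : ∀ n, ∃ σ τ τ', n < σ.length ∧ τ.length = τ'.length ∧ τ ≠ τ' ∧ P σ τ ∧ P σ τ')
    (n m : ℕ) :
    f n = m ↔ ∃ σ τ τ', (n < σ.length ∧ τ.length = τ'.length ∧ τ ≠ τ' ∧ σ.getD n 0 = m) ∧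
      P σ τ ∧ P σ τ' := by
  constructor
  · rintro rfl
    obtain ⟨σ, τ, τ', hn, hlen, hne, hτ, hτ'⟩ := hA n
    have hσ := initSeg_eq_of_two_partners hP' hlen hne hτ hτ'
    exact ⟨σ, τ, τ', ⟨hn, hlen, hne, by rw [← hσ, getD_initSeg hn]⟩, hτ, hτ'⟩
  · rintro ⟨σ, τ, τ', ⟨hn, hlen, hne, rfl⟩, hτ, hτ'⟩
    rw [← initSeg_eq_of_two_partners hP' hlen hne hτ hτ', getD_initSeg hn]

theorem initSeg_eq_of_no_two_partners (hP : ∀ a b, P (initSeg f a) (initSeg g b))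
    (hP' : ∀ σ τ, P σ τ → initSeg f σ.length = σ ∨ initSeg g τ.length = τ) {n₀ : ℕ}
    (hB : ¬∃ σ τ τ', n₀ < σ.length ∧ τ.length = τ'.length ∧ τ ≠ τ' ∧ P σ τ ∧ P σ τ')
    {σ τ : List ℕ} (hn : n₀ < σ.length) (hτ : P σ τ) : initSeg g τ.length = τ := by
  by_contra hne
  have hσ := (hP' σ τ hτ).resolve_right hne
  have hτ' : P σ (initSeg g τ.length) := hσ ▸ hP σ.length τ.length
  exact hB ⟨σ, τ, _, hn, (length_initSeg g _).symm, Ne.symm hne, hτ, hτ'⟩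

theorem graph_iff_of_no_two_partners (hP : ∀ a b, P (initSeg f a) (initSeg g b))
    (hP' : ∀ σ τ, P σ τ → initSeg f σ.length = σ ∨ initSeg g τ.length = τ) {n₀ : ℕ}
    (hB : ¬∃ σ τ τ', n₀ < σ.length ∧ τ.length = τ'.length ∧ τ ≠ τ' ∧ P σ τ ∧ P σ τ')
    (n m : ℕ) :
    g n = m ↔ ∃ σ τ, (σ.length = n₀ + n + 1 ∧ τ.length = n₀ + n + 1 ∧ τ.getD n 0 = m) ∧ P σ τ := by
  constructor
  · rintro rfl
    exact ⟨initSeg f _, initSeg g _,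
      ⟨length_initSeg .., length_initSeg .., getD_initSeg (by omega)⟩, hP _ _⟩
  · rintro ⟨σ, τ, ⟨hσ, hτ, rfl⟩, hστ⟩
    rw [← initSeg_eq_of_no_two_partners hP hP' hB (by omega) hστ, getD_initSeg (by omega)]

end Splitting

theorem subTuringLE_of_forall_two_partners {f g h : ℕ → ℕ} {P : List ℕ → List ℕ → Prop}
    (hPre : RePredIn h fun x : List ℕ × List ℕ => P x.1 x.2)
    (hP' : ∀ σ τ, P σ τ → initSeg f σ.length = σ ∨ initSeg g τ.length = τ)
    (hA : ∀ n, ∃ σ τ τ', n < σ.length ∧ τ.length = τ'.length ∧ τ ≠ τ' ∧ P σ τ ∧ P σ τ') :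
    SubTuringLE (f : ℕ →. ℕ) (h : ℕ →. ℕ) := by
  have hcert : RePredIn h fun z : (ℕ × ℕ) × List ℕ × List ℕ × List ℕ =>
      (z.1.1 < z.2.1.length ∧ z.2.2.1.length = z.2.2.2.length ∧ z.2.2.1 ≠ z.2.2.2 ∧
        z.2.1.getD z.1.1 0 = z.1.2) ∧ P z.2.1 z.2.2.1 ∧ P z.2.1 z.2.2.2 := by
    open Primrec in
    exact (PrimrecPred.rePredIn ((nat_lt.comp (fst.comp fst) (list_length.comp (fst.comp snd))).and
      ((Primrec.eq.comp (list_length.comp (fst.comp (snd.comp snd)))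
        (list_length.comp (snd.comp (snd.comp snd)))).and
      ((Primrec.eq.comp (fst.comp (snd.comp snd)) (snd.comp (snd.comp snd))).not.and
      (Primrec.eq.comp ((list_getD 0).comp (fst.comp snd) (fst.comp fst)) (snd.comp fst)))))).and
      ((hPre.comp ((fst.comp snd).pair (fst.comp (snd.comp snd)))).and
        (hPre.comp ((fst.comp snd).pair (snd.comp (snd.comp snd)))))
  refine subTuringLE_of_rePredIn_graph (hcert.exists.of_iff fun x => ?_)
  simp only [Prod.exists, graph_iff_of_forall_two_partners hP' hA x.1 x.2]

theorem subTuringLE_of_no_two_partners {f g h : ℕ → ℕ} {P : List ℕ → List ℕ → Prop}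
    (hPre : RePredIn h fun x : List ℕ × List ℕ => P x.1 x.2)
    (hP : ∀ a b, P (initSeg f a) (initSeg g b))
    (hP' : ∀ σ τ, P σ τ → initSeg f σ.length = σ ∨ initSeg g τ.length = τ) {n₀ : ℕ}
    (hB : ¬∃ σ τ τ', n₀ < σ.length ∧ τ.length = τ'.length ∧ τ ≠ τ' ∧ P σ τ ∧ P σ τ') :
    SubTuringLE (g : ℕ →. ℕ) (h : ℕ →. ℕ) := by
  have hcert : RePredIn h fun z : (ℕ × ℕ) × List ℕ × List ℕ =>
      (z.2.1.length = n₀ + z.1.1 + 1 ∧ z.2.2.length = n₀ + z.1.1 + 1 ∧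
        z.2.2.getD z.1.1 0 = z.1.2) ∧ P z.2.1 z.2.2 := by
    open Primrec in
    have hlen : Primrec fun z : (ℕ × ℕ) × List ℕ × List ℕ => n₀ + z.1.1 + 1 :=
      Primrec.succ.comp (nat_add.comp (const n₀) (fst.comp fst))
    exact (PrimrecPred.rePredIn ((Primrec.eq.comp (list_length.comp (fst.comp snd)) hlen).and
      ((Primrec.eq.comp (list_length.comp (snd.comp snd)) hlen).and
      (Primrec.eq.comp ((list_getD 0).comp (snd.comp snd) (fst.comp fst)) (snd.comp fst))))).and
      (hPre.comp snd)
  refine subTuringLE_of_rePredIn_graph (hcert.exists.of_iff fun x => ?_)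
  simp only [Prod.exists, graph_iff_of_no_two_partners hP hP' hB x.1 x.2]

theorem subTuringLE_or_of_pMeet_le {f g h : ℕ → ℕ}
    (H : SubTuringLE (PMeet (f : ℕ →. ℕ) (g : ℕ →. ℕ)) (h : ℕ →. ℕ)) :
    SubTuringLE (f : ℕ →. ℕ) (h : ℕ →. ℕ) ∨ SubTuringLE (g : ℕ →. ℕ) (h : ℕ →. ℕ) := by
  obtain ⟨Ψ, hΨ, hred⟩ := H
  obtain ⟨e, -, he⟩ := exists_primrec_phi_eq (Φ := fun (_ : Unit) => Ψ) (hΨ.comp Computable.snd)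
  obtain ⟨d, hd, hdσ⟩ := exists_prefixTester_index
  let w (σ τ : List ℕ) : ℕ := Nat.pair (d σ) (Nat.pair (d τ) 0)
  let P (σ τ : List ℕ) : Prop := HaltsTo (phi (e ())) (h : ℕ →. ℕ) (w σ τ) 0
  have hw : ∀ σ τ m, HaltsTo (phi (d σ)) (f : ℕ →. ℕ) 0 m → HaltsTo (phi (d τ)) (g : ℕ →. ℕ) 0 m →
      HaltsTo (phi (e ())) (h : ℕ →. ℕ) (w σ τ) m := fun σ τ m hσ hτ =>
    he () ▸ hred _ _ (mem_pMeet_iff.2 (by simpa [w] using And.intro hσ hτ))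
  have hP : ∀ a b, P (initSeg f a) (initSeg g b) := fun a b =>
    hw _ _ 0 (by simpa using hdσ f (initSeg f a) 0) (by simpa using hdσ g (initSeg g b) 0)
  have hP' : ∀ σ τ, P σ τ → initSeg f σ.length = σ ∨ initSeg g τ.length = τ := by
    intro σ τ hστ
    by_contra! hne
    have h1 := hw σ τ 1 (by simpa [hne.1] using hdσ f σ 0) (by simpa [hne.2] using hdσ g τ 0)
    exact zero_ne_one (hστ.unique h1)
  have hPre : RePredIn h fun x : List ℕ × List ℕ => P x.1 x.2 :=
    (rePredIn_haltsTo_phi (e ())).comp (Primrec.pair (Primrec₂.natPair.comp (hd.comp Primrec.fst)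
      (Primrec₂.natPair.comp (hd.comp Primrec.snd) (Primrec.const 0))) (Primrec.const 0))
  by_cases hA : ∀ n, ∃ σ τ τ', n < σ.length ∧ τ.length = τ'.length ∧ τ ≠ τ' ∧ P σ τ ∧ P σ τ'
  · exact .inl (subTuringLE_of_forall_two_partners hPre hP' hA)
  · obtain ⟨n₀, hB⟩ := not_forall.1 hA
    exact .inr (subTuringLE_of_no_two_partners hPre hP hP' hB)

theorem total_meet_irreducible :
    (∀ f g h : ℕ → ℕ,
      SubTuringLE (PMeet (f : ℕ →. ℕ) (g : ℕ →. ℕ)) (h : ℕ →. ℕ) →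
      SubTuringLE (f : ℕ →. ℕ) (h : ℕ →. ℕ) ∨ SubTuringLE (g : ℕ →. ℕ) (h : ℕ →. ℕ)) ∧
    ¬ ∃ f g : ℕ → ℕ, ¬ Computable f ∧ ¬ Computable g ∧
      ∀ p : ℕ →. ℕ, SubTuringLE p (f : ℕ →. ℕ) → SubTuringLE p (g : ℕ →. ℕ) →
        ∃ q : ℕ →. ℕ, Partrec q ∧ ∀ n m, m ∈ p n → m ∈ q n := by
  refine ⟨fun f g h => subTuringLE_or_of_pMeet_le, ?_⟩
  rintro ⟨f, g, hf, hg, hmin⟩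
  obtain ⟨q, hq, hext⟩ := hmin _ (pMeet_le_left _ _) (pMeet_le_right _ _)
  rcases subTuringLE_or_of_pMeet_le (h := fun _ => 0)
    (subTuringLE_of_partrec_extension hq hext _) with hle | hle
  · exact hf (computable_of_subTuringLE hle (Computable.const 0))
  · exact hg (computable_of_subTuringLE hle (Computable.const 0))
end
end
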